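/- Let T, Ω, Q be linear subspaces of ℝ^{n×n}, let Γ = Q ∩ T^⊥, and suppose ‖P_Ω P_{Γ^⊥}‖ ≤ 1/2. Then for any H_L, H_S ∈ ℝ^{n×n} with P_Q H_L = P_Q H_S, one has ‖P_Ω H_S‖_F ≤ 2‖P_{T^⊥} H_L‖_F + ‖P_{Ω^⊥} H_S‖_F. -/

import Mathlib

open scoped BigOperators Matrix

abbrev Mat (n : ℕ) := Matrix (Fin n) (Fin n) ℝ

/-- Trace (Frobenius) inner product `⟨X, Y⟩ = trace (Xᵀ Y)`. -/
def finner {n : ℕ} (X Y : Mat n) : ℝ := ∑ i, ∑ j, X i j * Y i j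

/-- Frobenius norm. -/
noncomputable def fnorm {n : ℕ} (X : Mat n) : ℝ := Real.sqrt (finner X X)

/-- Entrywise ℓ¹ norm. -/
def l1Norm {n : ℕ} (X : Mat n) : ℝ := ∑ i, ∑ j, |X i j|

/-- Entrywise ℓ∞ norm. -/
noncomputable def linfNorm {n : ℕ} (X : Mat n) : ℝ := ⨆ p : Fin n × Fin n, |X p.1 p.2|

/-- Spectral (ℓ² operator) norm. -/
noncomputable def specNorm {n : ℕ} (X : Mat n) : ℝ := ‖Matrix.toEuclideanCLM (𝕜 := ℝ) X‖

/-- Nuclear norm: the sum of the singular values, i.e. of the square roots of the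
eigenvalues of `Xᵀ * X`. -/
noncomputable def nucNorm {n : ℕ} (X : Mat n) : ℝ :=
  ∑ i, Real.sqrt ((show (Xᵀ * X).IsHermitian by
    simpa [Matrix.conjTranspose_eq_transpose_of_trivial] using
      Matrix.isHermitian_conjTranspose_mul_self X).eigenvalues i)

/-- Operator norm of a linear map on matrix space, w.r.t. the Frobenius norm:
`sup {‖A X‖_F : ‖X‖_F = 1}`. -/
noncomputable def opNorm {n : ℕ} (A : Mat n →ₗ[ℝ] Mat n) : ℝ :=
  sSup {c : ℝ | ∃ X : Mat n, fnorm X = 1 ∧ c = fnorm (A X)}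

/-- `P` is the orthogonal projection onto the subspace `V` (w.r.t. the trace inner product). -/
def IsOrthProj {n : ℕ} (V : Submodule ℝ (Mat n)) (P : Mat n →ₗ[ℝ] Mat n) : Prop :=
  (∀ X, P X ∈ V) ∧ (∀ X ∈ V, P X = X) ∧ (∀ X, ∀ Y ∈ V, finner (X - P X) Y = 0)

/-- Orthogonal complement of a subspace of matrix space w.r.t. the trace inner product. -/
def orthComp {n : ℕ} (V : Submodule ℝ (Mat n)) : Submodule ℝ (Mat n) where
  carrier := {X | ∀ Y ∈ V, finner X Y = 0}
  zero_mem' := by intro Y hY; simp [finner]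
  add_mem' := by
    intro a b ha hb Y hY
    have h1 := ha Y hY
    have h2 := hb Y hY
    simp only [finner, Matrix.add_apply, add_mul, Finset.sum_add_distrib] at *
    rw [h1, h2]; ring
  smul_mem' := by
    intro c a ha Y hY
    have h1 := ha Y hY
    simp only [finner, Matrix.smul_apply, smul_eq_mul, mul_assoc, ← Finset.mul_sum] at *
    rw [h1]; ring

/-- The tangent space `T = {U Xᵀ + Y Vᵀ}` associated with the reduced SVD `L₀ = U Σ Vᵀ`. -/
def tangentT {n r : ℕ} (U V : Matrix (Fin n) (Fin r) ℝ) : Submodule ℝ (Mat n) where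
  carrier := {A | ∃ X Y : Matrix (Fin n) (Fin r) ℝ, A = U * Xᵀ + Y * Vᵀ}
  zero_mem' := ⟨0, 0, by simp⟩
  add_mem' := by
    rintro a b ⟨X1, Y1, rfl⟩ ⟨X2, Y2, rfl⟩
    exact ⟨X1 + X2, Y1 + Y2, by rw [Matrix.transpose_add, Matrix.mul_add, Matrix.add_mul]; abel⟩
  smul_mem' := by
    rintro c a ⟨X1, Y1, rfl⟩
    exact ⟨c • X1, c • Y1,
      by rw [Matrix.transpose_smul, Matrix.mul_smul, Matrix.smul_mul, smul_add]⟩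

/-- The support subspace `Ω` of `S₀`: matrices vanishing wherever `S₀` vanishes. -/
def suppSub {n : ℕ} (S0 : Mat n) : Submodule ℝ (Mat n) where
  carrier := {X | ∀ i j, S0 i j = 0 → X i j = 0}
  zero_mem' := by intro i j _; rfl
  add_mem' := by
    intro a b ha hb i j h
    simp [Matrix.add_apply, ha i j h, hb i j h]
  smul_mem' := by
    intro c a ha i j h
    simp [Matrix.smul_apply, ha i j h]

/-- Entrywise sign matrix. -/
noncomputable def sgnMat {n : ℕ} (S : Mat n) : Mat n := Matrix.of fun i j => Real.sign (S i j)
/-! The difference `H_S - H_L` lies in `Q^⊥ ⊆ Γ^⊥`, so `G := H_S - P_{Γ^⊥} H_S = H_L - P_{Γ^⊥} H_L`.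
The latter is the residual of projecting `H_L` onto `Γ^⊥`, which contains `H_L - P_{T^⊥} H_L`
because `Γ ⊆ T^⊥`; by the best-approximation property `‖G‖_F ≤ ‖P_{T^⊥} H_L‖_F`. Splitting
`P_Ω H_S = P_Ω G + P_Ω P_{Γ^⊥} H_S` and bounding the second term by
`½ ‖H_S‖_F ≤ ½ (‖P_Ω H_S‖_F + ‖P_{Ω^⊥} H_S‖_F)` gives the claim after absorbing `½ ‖P_Ω H_S‖_F`. -/

section Frobenius

variable {n : ℕ}

def Mat.toEuclidean : Mat n ≃ₗ[ℝ] EuclideanSpace ℝ (Fin n × Fin n) where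
  toFun X := WithLp.toLp 2 fun p => X p.1 p.2
  invFun v := Matrix.of fun i j => v (i, j)
  map_add' _ _ := rfl
  map_smul' _ _ := rfl
  left_inv _ := rfl
  right_inv _ := rfl

@[simp]
theorem Mat.toEuclidean_apply (X : Mat n) (p : Fin n × Fin n) :
    Mat.toEuclidean X p = X p.1 p.2 := rfl

theorem finner_eq_inner (X Y : Mat n) :
    finner X Y = inner ℝ (Mat.toEuclidean X) (Mat.toEuclidean Y) := by
  simp [finner, PiLp.inner_apply, Fintype.sum_prod_type, mul_comm]

theorem fnorm_eq_norm (X : Mat n) : fnorm X = ‖Mat.toEuclidean X‖ := by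
  rw [fnorm, finner_eq_inner, norm_eq_sqrt_real_inner]

theorem finner_comm (X Y : Mat n) : finner X Y = finner Y X := by
  rw [finner_eq_inner, finner_eq_inner, real_inner_comm]

theorem fnorm_smul (c : ℝ) (X : Mat n) : fnorm (c • X) = |c| * fnorm X := by
  rw [fnorm_eq_norm, fnorm_eq_norm, map_smul, norm_smul, Real.norm_eq_abs]

theorem fnorm_nonneg (X : Mat n) : 0 ≤ fnorm X := Real.sqrt_nonneg _

theorem fnorm_add_le (X Y : Mat n) : fnorm (X + Y) ≤ fnorm X + fnorm Y := by
  simpa only [fnorm_eq_norm, map_add] using norm_add_le _ _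

theorem fnorm_le_fnorm_add_of_finner_eq_zero {X Y : Mat n} (h : finner X Y = 0) :
    fnorm X ≤ fnorm (X + Y) := by
  rw [finner_eq_inner] at h
  have hpyth := norm_add_sq_eq_norm_sq_add_norm_sq_real h
  rw [fnorm_eq_norm, fnorm_eq_norm, map_add]
  refine (mul_self_le_mul_self_iff (norm_nonneg _) (norm_nonneg _)).mpr ?_
  rw [hpyth]
  exact le_add_of_nonneg_right (mul_self_nonneg _)

theorem fnorm_eq_zero {X : Mat n} : fnorm X = 0 ↔ X = 0 := by
  rw [fnorm_eq_norm, norm_eq_zero, LinearEquiv.map_eq_zero_iff]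

theorem opNorm_bddAbove (A : Mat n →ₗ[ℝ] Mat n) :
    BddAbove {c : ℝ | ∃ X : Mat n, fnorm X = 1 ∧ c = fnorm (A X)} := by
  let C := LinearMap.toContinuousLinearMap
    (Mat.toEuclidean.toLinearMap ∘ₗ A ∘ₗ Mat.toEuclidean.symm.toLinearMap)
  refine ⟨‖C‖, ?_⟩
  rintro _ ⟨X, hX, rfl⟩
  have hCX : fnorm (A X) = ‖C (Mat.toEuclidean X)‖ := by simp [C, fnorm_eq_norm]
  rw [hCX, ← mul_one ‖C‖, ← hX, fnorm_eq_norm]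
  exact C.le_opNorm _

theorem fnorm_apply_le_opNorm_mul (A : Mat n →ₗ[ℝ] Mat n) (X : Mat n) :
    fnorm (A X) ≤ opNorm A * fnorm X := by
  rcases (fnorm_nonneg X).eq_or_lt with hX | hX
  · obtain rfl := fnorm_eq_zero.mp hX.symm
    rw [map_zero, fnorm_eq_zero.mpr rfl, mul_zero]
  · set t := (fnorm X)⁻¹
    have ht : 0 < t := inv_pos.mpr hX
    have hunit : fnorm (t • X) = 1 := by
      rw [fnorm_smul, abs_of_pos ht, inv_mul_cancel₀ hX.ne']
    calc fnorm (A X) = fnorm X * fnorm (A (t • X)) := by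
          rw [map_smul, fnorm_smul, abs_of_pos ht, ← mul_assoc, mul_inv_cancel₀ hX.ne', one_mul]
      _ ≤ fnorm X * opNorm A := by
          gcongr
          exact le_csSup (opNorm_bddAbove A) ⟨t • X, hunit, rfl⟩
      _ = opNorm A * fnorm X := mul_comm _ _

end Frobenius

section OrthProj

variable {n : ℕ} {V W : Submodule ℝ (Mat n)}

theorem orthComp_anti (h : V ≤ W) : orthComp W ≤ orthComp V :=
  fun _ hX Y hY => hX Y (h hY)

theorem le_orthComp_orthComp : V ≤ orthComp (orthComp V) :=
  fun X hX Y hY => by rw [finner_comm]; exact hY X hX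

theorem eq_zero_of_mem_of_mem_orthComp {X : Mat n} (hX : X ∈ V) (hX' : X ∈ orthComp V) :
    X = 0 := by
  rw [← fnorm_eq_zero, fnorm, hX' X hX, Real.sqrt_zero]

namespace IsOrthProj

variable {P P' : Mat n →ₗ[ℝ] Mat n}

theorem sub_apply_mem_orthComp (hP : IsOrthProj V P) (X : Mat n) : X - P X ∈ orthComp V :=
  hP.2.2 X

theorem eq_of_sub_mem_orthComp (hP : IsOrthProj V P) {X Y : Mat n} (hY : Y ∈ V)
    (hXY : X - Y ∈ orthComp V) : P X = Y := by
  have hdiff : P X - Y = (X - Y) - (X - P X) := by abel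
  refine sub_eq_zero.mp (eq_zero_of_mem_of_mem_orthComp (V.sub_mem (hP.1 X) hY) ?_)
  rw [hdiff]
  exact (orthComp V).sub_mem hXY (hP.sub_apply_mem_orthComp X)

theorem sub_mem_orthComp_of_apply_eq (hP : IsOrthProj V P) {X Y : Mat n} (h : P X = P Y) :
    X - Y ∈ orthComp V := by
  simpa [map_sub, h] using hP.sub_apply_mem_orthComp (X - Y)

theorem apply_add_apply_orthComp (hP : IsOrthProj V P) (hP' : IsOrthProj (orthComp V) P')
    (X : Mat n) : P X + P' X = X := by
  rw [hP'.eq_of_sub_mem_orthComp (hP.sub_apply_mem_orthComp X) (by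
    rw [sub_sub_cancel]; exact le_orthComp_orthComp (hP.1 X))]
  abel

theorem fnorm_sub_apply_le (hP : IsOrthProj V P) (X : Mat n) {v : Mat n} (hv : v ∈ V) :
    fnorm (X - P X) ≤ fnorm (X - v) := by
  simpa only [sub_add_sub_cancel] using fnorm_le_fnorm_add_of_finner_eq_zero
    (hP.sub_apply_mem_orthComp X (P X - v) (V.sub_mem (hP.1 X) hv))

theorem fnorm_apply_le (hP : IsOrthProj V P) (X : Mat n) : fnorm (P X) ≤ fnorm X := by
  have h := hP.sub_apply_mem_orthComp X (P X) (hP.1 X)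
  rw [finner_comm] at h
  simpa only [add_sub_cancel] using fnorm_le_fnorm_add_of_finner_eq_zero h

end IsOrthProj

end OrthProj

/-- With `Γ = Q ∩ T^⊥` and `‖P_Ω P_{Γ^⊥}‖ ≤ 1/2`, any `H_L, H_S` with
`P_Q H_L = P_Q H_S` satisfy `‖P_Ω H_S‖_F ≤ 2‖P_{T^⊥} H_L‖_F + ‖P_{Ω^⊥} H_S‖_F`. -/
theorem statement7 {n : ℕ} (T Ω Q : Submodule ℝ (Mat n))
    (PQ PΩ PΩperp PTperp PΓperp : Mat n →ₗ[ℝ] Mat n)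
    (hPQ : IsOrthProj Q PQ)
    (hPΩ : IsOrthProj Ω PΩ)
    (hPΩperp : IsOrthProj (orthComp Ω) PΩperp)
    (hPTperp : IsOrthProj (orthComp T) PTperp)
    (hPΓperp : IsOrthProj (orthComp (Q ⊓ orthComp T)) PΓperp)
    (hop : opNorm (PΩ ∘ₗ PΓperp) ≤ 1 / 2) :
    ∀ HL HS : Mat n, PQ HL = PQ HS →
      fnorm (PΩ HS) ≤ 2 * fnorm (PTperp HL) + fnorm (PΩperp HS) := by
  intro HL HS hQ
  have hdiff : HS - HL ∈ orthComp (Q ⊓ orthComp T) :=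
    orthComp_anti inf_le_left (hPQ.sub_mem_orthComp_of_apply_eq hQ.symm)
  have hresidual : HS - PΓperp HS = HL - PΓperp HL := by
    rw [← sub_eq_zero, sub_sub_sub_comm, ← map_sub, hPΓperp.2.1 _ hdiff, sub_self]
  have hresidual_le : fnorm (HS - PΓperp HS) ≤ fnorm (PTperp HL) := by
    have hmem : HL - PTperp HL ∈ orthComp (Q ⊓ orthComp T) :=
      orthComp_anti inf_le_right (hPTperp.sub_apply_mem_orthComp HL)
    simpa only [hresidual, sub_sub_cancel] using hPΓperp.fnorm_sub_apply_le HL hmem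
  have hΓperp_part : fnorm (PΩ (PΓperp HS)) ≤ 1 / 2 * (fnorm (PΩ HS) + fnorm (PΩperp HS)) :=
    calc fnorm (PΩ (PΓperp HS)) ≤ opNorm (PΩ ∘ₗ PΓperp) * fnorm HS :=
          fnorm_apply_le_opNorm_mul (PΩ ∘ₗ PΓperp) HS
      _ ≤ 1 / 2 * fnorm (PΩ HS + PΩperp HS) := by
          rw [hPΩ.apply_add_apply_orthComp hPΩperp]
          exact mul_le_mul_of_nonneg_right hop (fnorm_nonneg HS)
      _ ≤ 1 / 2 * (fnorm (PΩ HS) + fnorm (PΩperp HS)) := by gcongr; exact fnorm_add_le _ _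
  have hsplit : fnorm (PΩ HS) ≤ fnorm (PTperp HL) + fnorm (PΩ (PΓperp HS)) :=
    calc fnorm (PΩ HS) = fnorm (PΩ (HS - PΓperp HS) + PΩ (PΓperp HS)) := by
          rw [← map_add, sub_add_cancel]
      _ ≤ fnorm (PΩ (HS - PΓperp HS)) + fnorm (PΩ (PΓperp HS)) := fnorm_add_le _ _
      _ ≤ fnorm (PTperp HL) + fnorm (PΩ (PΓperp HS)) := by
          gcongr
          exact (hPΩ.fnorm_apply_le _).trans hresidual_le
  linarith
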